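/- arXiv:1811.00978 — 3 statements merged into one kernel-verified Lean document; each statement's English description precedes it below -/
import Mathlib

section
/- Let ν be a nonnegative measure on the boundary ∂T² of a finite bi-tree with support E, and suppose its energy satisfies ℰ[ν] = ∫ 𝕍^ν dν ≥ C|ν| for some C > 0. Then there exists a subset Ẽ ⊂ E such that, setting ν̃ = ν|Ẽ, one has 𝕍^{ν̃}(ω) ≥ C/3 for every ω ∈ Ẽ, and ℰ[ν̃] ≥ (1/6) ℰ[ν]. -/
open Finset
open scoped Classical

noncomputable section

variable {X Y : Type*} [Fintype X] [Fintype Y] [PartialOrder X] [PartialOrder Y]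

/-- Hardy operator 𝕀 on the bi-tree: sum over ancestors (larger elements). -/
def hI (f : X × Y → ℝ) (a : X × Y) : ℝ :=
  ∑ b ∈ Finset.univ.filter (fun b => a ≤ b), f b

/-- Adjoint Hardy operator 𝕀*: sum over descendants (smaller elements). -/
def hIs (f : X × Y → ℝ) (a : X × Y) : ℝ :=
  ∑ b ∈ Finset.univ.filter (fun b => b ≤ a), f b

/-- Potential 𝕍^μ = 𝕀(𝕀*μ). -/
def pot (μ : X × Y → ℝ) : X × Y → ℝ := hI (hIs μ)

/-- Energy ℰ[μ] = Σ_α (𝕀*μ(α))². -/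
def energy (μ : X × Y → ℝ) : ℝ := ∑ a : X × Y, (hIs μ a) ^ 2

/-- Restriction μ|E of a measure to a set E. -/
def restrict (μ : X × Y → ℝ) (E : Finset (X × Y)) : X × Y → ℝ :=
  fun ω => if ω ∈ E then μ ω else 0

/-- Total mass |μ| = Σ_{ω ∈ ∂T²} μ(ω); the boundary ∂T² is the set of minimal vertices. -/
def mass (μ : X × Y → ℝ) : ℝ :=
  ∑ ω ∈ Finset.univ.filter (fun ω : X × Y => IsMin ω), μ ω

lemma hIs_restrict_mono (ν : X × Y → ℝ) (hν0 : ∀ a, 0 ≤ ν a) {F G : Finset (X × Y)}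
    (hFG : F ⊆ G) (a : X × Y) : hIs (restrict ν F) a ≤ hIs (restrict ν G) a := by
  apply Finset.sum_le_sum
  intro b _
  unfold _root_.restrict
  by_cases hb : b ∈ F
  · simp [hb, hFG hb]
  · simp only [hb, if_false]
    split <;> simp [hν0 b, le_refl]

lemma hIs_restrict_nonneg (ν : X × Y → ℝ) (hν0 : ∀ a, 0 ≤ ν a) (F : Finset (X × Y))
    (a : X × Y) : 0 ≤ hIs (restrict ν F) a := by
  apply Finset.sum_nonneg
  intro b _
  unfold _root_.restrict
  split <;> simp [hν0 b, le_refl]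

/-- The key energy estimate for removing a single point. -/
lemma energy_erase_le (ν : X × Y → ℝ) (hν0 : ∀ a, 0 ≤ ν a) (F : Finset (X × Y))
    (ω₀ : X × Y) (hω₀ : ω₀ ∈ F) :
    energy (restrict ν F) ≤ energy (restrict ν (F.erase ω₀))
      + 2 * ν ω₀ * pot (restrict ν F) ω₀ := by
  set μ := restrict ν F with hμ
  set μ' := restrict ν (F.erase ω₀) with hμ'
  have hdiff : ∀ a, hIs μ a = hIs μ' a + (if ω₀ ≤ a then ν ω₀ else 0) := by
    intro a
    have : hIs μ a - hIs μ' a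
        = ∑ b ∈ Finset.univ.filter (fun b => b ≤ a), (μ b - μ' b) := by
      rw [Finset.sum_sub_distrib]; rfl
    have hterm : ∀ b, μ b - μ' b = if b = ω₀ then ν ω₀ else 0 := by
      intro b
      simp only [hμ, hμ']
      unfold _root_.restrict
      by_cases hb : b = ω₀
      · subst hb; simp [hω₀]
      · simp [Finset.mem_erase, hb]
    rw [funext hterm] at this
    rw [Finset.sum_ite_eq' (Finset.univ.filter (fun b => b ≤ a)) ω₀ (fun _ => ν ω₀)] at this
    simp only [Finset.mem_filter, Finset.mem_univ, true_and] at this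
    linarith [this]
  have hmono : ∀ a, hIs μ' a ≤ hIs μ a :=
    fun a => hIs_restrict_mono ν hν0 (Finset.erase_subset ω₀ F) a
  have hnn : ∀ a, 0 ≤ hIs μ a := hIs_restrict_nonneg ν hν0 F
  have hterm : ∀ a, (hIs μ a) ^ 2
      ≤ (hIs μ' a) ^ 2 + (if ω₀ ≤ a then 2 * ν ω₀ * hIs μ a else 0) := by
    intro a
    have hd := hdiff a
    by_cases h : ω₀ ≤ a
    · rw [if_pos h] at hd ⊢
      have h1 := hν0 ω₀
      have h2 := hnn a
      have h3 := hmono a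
      clear h
      nlinarith [h1, h2, h3, hd]
    · rw [if_neg h, add_zero] at hd
      rw [if_neg h, add_zero]
      exact le_of_eq (by rw [hd])
  have hsum : energy μ ≤ energy μ'
      + ∑ a : X × Y, (if ω₀ ≤ a then 2 * ν ω₀ * hIs μ a else 0) := by
    unfold energy
    rw [← Finset.sum_add_distrib]
    exact Finset.sum_le_sum (fun a _ => hterm a)
  have hpot : ∑ a : X × Y, (if ω₀ ≤ a then 2 * ν ω₀ * hIs μ a else 0)
      = 2 * ν ω₀ * pot μ ω₀ := by
    rw [← Finset.sum_filter]
    unfold pot hI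
    rw [Finset.mul_sum]
  linarith [hsum, hpot.le, hpot.ge]

/-- The inductive pruning lemma. -/
lemma prune (ν : X × Y → ℝ) (hν0 : ∀ a, 0 ≤ ν a) (C : ℝ) (hC : 0 ≤ C) :
    ∀ F : Finset (X × Y), ∃ G : Finset (X × Y), G ⊆ F ∧
      (∀ ω ∈ G, C / 3 ≤ pot (restrict ν G) ω) ∧
      energy (restrict ν F) ≤ energy (restrict ν G) + (2 * C / 3) * ∑ ω ∈ F \ G, ν ω := by
  intro F
  induction F using Finset.strongInduction with
  | _ F ih =>
    by_cases hgood : ∀ ω ∈ F, C / 3 ≤ pot (restrict ν F) ω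
    · refine ⟨F, Finset.Subset.refl F, hgood, ?_⟩
      simp
    · push_neg at hgood
      obtain ⟨ω₀, hω₀F, hω₀pot⟩ := hgood
      obtain ⟨G, hGsub, hGpot, hGen⟩ := ih (F.erase ω₀) (Finset.erase_ssubset hω₀F)
      refine ⟨G, hGsub.trans (Finset.erase_subset ω₀ F), hGpot, ?_⟩
      have hstep := energy_erase_le ν hν0 F ω₀ hω₀F
      have hω₀G : ω₀ ∉ G := fun h => (Finset.mem_erase.mp (hGsub h)).1 rfl
      have hsets : F \ G = insert ω₀ ((F.erase ω₀) \ G) := by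
        ext a
        simp only [Finset.mem_sdiff, Finset.mem_insert, Finset.mem_erase]
        constructor
        · rintro ⟨haF, haG⟩
          by_cases h : a = ω₀
          · exact Or.inl h
          · exact Or.inr ⟨⟨h, haF⟩, haG⟩
        · rintro (rfl | ⟨⟨_, haF⟩, haG⟩)
          · exact ⟨hω₀F, hω₀G⟩
          · exact ⟨haF, haG⟩
      have hnotmem : ω₀ ∉ (F.erase ω₀) \ G := by
        simp [Finset.mem_sdiff, Finset.mem_erase]
      have hsum : ∑ ω ∈ F \ G, ν ω = ν ω₀ + ∑ ω ∈ (F.erase ω₀) \ G, ν ω := by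
        rw [hsets, Finset.sum_insert hnotmem]
      have hbound : 2 * ν ω₀ * pot (restrict ν F) ω₀ ≤ (2 * C / 3) * ν ω₀ := by
        have := hν0 ω₀
        nlinarith
      rw [hsum]
      linarith

/-- Lemma 3.1: if ℰ[ν] ≥ C|ν|, there is a subset Ẽ of supp ν such that, for ν̃ = ν|Ẽ,
𝕍^{ν̃} ≥ C/3 on Ẽ and ℰ[ν̃] ≥ ℰ[ν]/6. -/
theorem stmt6 (ν : X × Y → ℝ) (hν0 : ∀ a : X × Y, 0 ≤ ν a)
    (hνsupp : ∀ a : X × Y, ¬ IsMin a → ν a = 0)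
    (C : ℝ) (hC : 0 < C) (hen : C * mass ν ≤ energy ν) :
    ∃ Et : Finset (X × Y), (∀ ω ∈ Et, 0 < ν ω) ∧
      (∀ ω ∈ Et, C / 3 ≤ pot (restrict ν Et) ω) ∧
      energy ν / 6 ≤ energy (restrict ν Et) := by
  set F : Finset (X × Y) := Finset.univ.filter (fun ω => 0 < ν ω) with hF
  have hrestr : restrict ν F = ν := by
    funext ω
    unfold _root_.restrict
    by_cases h : ω ∈ F
    · simp [h]
    · simp only [h, if_false]
      simp only [hF, Finset.mem_filter, Finset.mem_univ, true_and] at h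
      exact ((hν0 ω).antisymm (not_lt.mp h))
  obtain ⟨G, hGsub, hGpot, hGen⟩ := prune ν hν0 C hC.le F
  refine ⟨G, ?_, hGpot, ?_⟩
  · intro ω hω
    have := hGsub hω
    simp only [hF, Finset.mem_filter, Finset.mem_univ, true_and] at this
    exact this
  · rw [hrestr] at hGen
    have hmass : ∑ ω ∈ F \ G, ν ω ≤ mass ν := by
      unfold mass
      apply Finset.sum_le_sum_of_subset_of_nonneg
      · intro a ha
        simp only [Finset.mem_sdiff, hF, Finset.mem_filter, Finset.mem_univ, true_and] at ha
        simp only [Finset.mem_filter, Finset.mem_univ, true_and]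
        by_contra hmin
        exact absurd (hνsupp a hmin) (ne_of_gt ha.1)
      · intro a _ _
        exact hν0 a
    have hCm : (2 * C / 3) * ∑ ω ∈ F \ G, ν ω ≤ (2 / 3) * energy ν := by
      have h1 : (2 * C / 3) * ∑ ω ∈ F \ G, ν ω ≤ (2 * C / 3) * mass ν := by
        apply mul_le_mul_of_nonneg_left hmass
        positivity
      have h2 : (2 * C / 3) * mass ν = (2 / 3) * (C * mass ν) := by ring
      nlinarith
    have henn : 0 ≤ energy ν := Finset.sum_nonneg (fun a _ => sq_nonneg _)
    linarith

end
end

section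
/- Let σ be a nonnegative measure on ∂T² of a finite bi-tree that is supported on a sequence of sets: σ = Σ_{k=0}^{N} σ_k + σ_∞, constructed iteratively so that E_k = {ω ∉ ∪_{j<k} E_j : 𝕍^{σ - Σ_{j<k} σ_j}(ω) ≤ 1} and σ_k = σ|E_k, with σ_∞ = σ|(E \ ∪_k E_k) where E = supp σ. Then the total energy satisfies ℰ[σ] ≤ 2|σ| + 2ℰ[σ_∞]. -/
open Finset
open scoped Classical

noncomputable section

variable {X Y : Type*} [Fintype X] [Fintype Y] [PartialOrder X] [PartialOrder Y]

/-- Bilinear energy form. -/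
def En (μ ν : X × Y → ℝ) : ℝ := ∑ a : X × Y, hIs μ a * hIs ν a

lemma hIs_mono {f g : X × Y → ℝ} (h : ∀ x, f x ≤ g x) (a : X × Y) :
    hIs f a ≤ hIs g a := Finset.sum_le_sum fun b _ => h b

lemma hIs_nonneg {f : X × Y → ℝ} (h : ∀ x, 0 ≤ f x) (a : X × Y) : 0 ≤ hIs f a :=
  Finset.sum_nonneg fun b _ => h b

lemma hIs_sum {ι : Type*} (s : Finset ι) (f : ι → X × Y → ℝ) (a : X × Y) :
    hIs (fun x => ∑ k ∈ s, f k x) a = ∑ k ∈ s, hIs (f k) a := by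
  simp only [hIs]
  rw [Finset.sum_comm]

lemma hIs_add (f g : X × Y → ℝ) (a : X × Y) :
    hIs (fun x => f x + g x) a = hIs f a + hIs g a := by
  simp [hIs, Finset.sum_add_distrib]

lemma En_comm (μ ν : X × Y → ℝ) : En μ ν = En ν μ := by
  simp [En, mul_comm]

lemma energy_eq_En (μ : X × Y → ℝ) : energy μ = En μ μ := by
  simp [energy, En, sq]

lemma En_nonneg {μ ν : X × Y → ℝ} (hμ : ∀ x, 0 ≤ μ x) (hν : ∀ x, 0 ≤ ν x) :
    0 ≤ En μ ν :=
  Finset.sum_nonneg fun a _ => mul_nonneg (hIs_nonneg hμ a) (hIs_nonneg hν a)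

lemma En_mono_left {f g ν : X × Y → ℝ} (h : ∀ x, f x ≤ g x) (hν : ∀ x, 0 ≤ ν x) :
    En f ν ≤ En g ν :=
  Finset.sum_le_sum fun a _ =>
    mul_le_mul_of_nonneg_right (hIs_mono h a) (hIs_nonneg hν a)

lemma En_add_left (f g ν : X × Y → ℝ) :
    En (fun x => f x + g x) ν = En f ν + En g ν := by
  simp [En, hIs_add, add_mul, Finset.sum_add_distrib]

lemma En_sum_left {ι : Type*} (s : Finset ι) (f : ι → X × Y → ℝ) (ν : X × Y → ℝ) :
    En (fun x => ∑ k ∈ s, f k x) ν = ∑ k ∈ s, En (f k) ν := by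
  simp only [En, hIs_sum, Finset.sum_mul]
  rw [Finset.sum_comm]

lemma En_eq_pot (μ ν : X × Y → ℝ) : En μ ν = ∑ ω : X × Y, pot μ ω * ν ω := by
  have h1 : ∀ a : X × Y, hIs μ a * hIs ν a
      = ∑ ω : X × Y, if ω ≤ a then hIs μ a * ν ω else 0 := by
    intro a
    unfold hIs
    rw [Finset.mul_sum, Finset.sum_filter]
  have h2 : ∀ ω : X × Y, pot μ ω * ν ω
      = ∑ a : X × Y, if ω ≤ a then hIs μ a * ν ω else 0 := by
    intro ω
    unfold pot hI
    rw [Finset.sum_mul, Finset.sum_filter]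
  simp_rw [En, h1, h2]
  exact Finset.sum_comm

/-- The iterative decomposition of Lemma 3.1: with E_k the set of points of supp σ outside
∪_{j<k} E_j where the potential of σ − Σ_{j<k} σ_j is ≤ 1, σ_k = σ|E_k, and
σ_∞ = σ|(supp σ \ ∪_{k ≤ N} E_k), one has ℰ[σ] ≤ 2|σ| + 2ℰ[σ_∞]. -/
theorem stmt7 (σ : X × Y → ℝ) (hσ0 : ∀ a : X × Y, 0 ≤ σ a)
    (hσsupp : ∀ a : X × Y, ¬ IsMin a → σ a = 0)
    (N : ℕ) (Ek : ℕ → Finset (X × Y))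
    (hE : ∀ k : ℕ, ∀ ω : X × Y,
      ω ∈ Ek k ↔ (0 < σ ω ∧ (∀ j < k, ω ∉ Ek j) ∧
        pot (fun x => if ∀ j < k, x ∉ Ek j then σ x else 0) ω ≤ 1))
    (hstop : ∀ k : ℕ, N < k → Ek k = ∅) :
    energy σ ≤ 2 * mass σ +
      2 * energy (fun ω => if 0 < σ ω ∧ ∀ k ≤ N, ω ∉ Ek k then σ ω else 0) := by
  set σinf : X × Y → ℝ := fun ω => if 0 < σ ω ∧ ∀ k ≤ N, ω ∉ Ek k then σ ω else 0
    with hσinf_def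
  set σk : ℕ → X × Y → ℝ := fun k ω => if ω ∈ Ek k then σ ω else 0 with hσk_def
  set μk : ℕ → X × Y → ℝ := fun k x => if ∀ j < k, x ∉ Ek j then σ x else 0 with hμk_def
  set s : Finset ℕ := Finset.range (N + 1) with hs_def
  -- basic nonnegativity
  have hσk0 : ∀ k x, 0 ≤ σk k x := by
    intro k x; simp only [hσk_def]; split <;> [exact hσ0 x; exact le_rfl]
  have hσinf0 : ∀ x, 0 ≤ σinf x := by
    intro x; simp only [hσinf_def]; split <;> [exact hσ0 x; exact le_rfl]
  have hμk0 : ∀ k x, 0 ≤ μk k x := by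
    intro k x; simp only [hμk_def]; split <;> [exact hσ0 x; exact le_rfl]
  -- disjointness
  have hdisj : ∀ k l : ℕ, k < l → ∀ x, x ∈ Ek l → x ∉ Ek k :=
    fun k l hkl x hx => ((hE l x).1 hx).2.1 k hkl
  -- decomposition σ = Σ σk + σinf
  have hdecomp : ∀ x, σ x = (∑ k ∈ s, σk k x) + σinf x := by
    intro x
    by_cases hx : ∃ k, x ∈ Ek k
    · obtain ⟨k0, hk0⟩ := hx
      have hk0N : k0 ≤ N := by
        by_contra h
        push_neg at h
        rw [hstop k0 h] at hk0
        exact absurd hk0 (Finset.notMem_empty x)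
      have hinf0 : σinf x = 0 := by
        simp only [hσinf_def]
        rw [if_neg]
        rintro ⟨-, h2⟩
        exact h2 k0 hk0N hk0
      rw [hinf0, add_zero, Finset.sum_eq_single k0]
      · simp [hσk_def, hk0]
      · intro k hk hne
        simp only [hσk_def]
        rw [if_neg]
        intro hxk
        rcases lt_or_gt_of_ne hne with h | h
        · exact hdisj k k0 h x hk0 hxk
        · exact hdisj k0 k h x hxk hk0
      · intro h
        exact absurd (Finset.mem_range.2 (Nat.lt_succ_of_le hk0N)) h
    · push_neg at hx
      have hz : ∀ k ∈ s, σk k x = 0 := by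
        intro k _; simp [hσk_def, hx k]
      rw [Finset.sum_eq_zero hz, zero_add]
      by_cases h0 : 0 < σ x
      · simp only [hσinf_def]
        rw [if_pos ⟨h0, fun k _ => hx k⟩]
      · have h00 : σ x = 0 := le_antisymm (not_lt.1 h0) (hσ0 x)
        simp [hσinf_def, h00, h0]
  -- pointwise bound: tail + σinf ≤ μk
  have hpt : ∀ k ∈ s, ∀ x,
      (∑ l ∈ s.filter (fun l => k ≤ l), σk l x) + σinf x ≤ μk k x := by
    intro k hk x
    have hkN : k ≤ N := Nat.lt_succ_iff.1 (Finset.mem_range.1 hk)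
    by_cases hj : ∀ j < k, x ∉ Ek j
    · have hμ : μk k x = σ x := by simp only [hμk_def]; rw [if_pos hj]
      rw [hμ]
      calc (∑ l ∈ s.filter (fun l => k ≤ l), σk l x) + σinf x
          ≤ (∑ l ∈ s, σk l x) + σinf x := by
            have hsub : (∑ l ∈ s.filter (fun l => k ≤ l), σk l x) ≤ ∑ l ∈ s, σk l x :=
              Finset.sum_le_sum_of_subset_of_nonneg
                (Finset.filter_subset (fun l => k ≤ l) s) (fun i _ _ => hσk0 i x)
            linarith
        _ = σ x := (hdecomp x).symm
    · push_neg at hj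
      obtain ⟨j0, hj0k, hj0⟩ := hj
      have hμ : μk k x = 0 := by
        simp only [hμk_def]
        rw [if_neg]
        push_neg
        exact ⟨j0, hj0k, hj0⟩
      have h1 : ∑ l ∈ s.filter (fun l => k ≤ l), σk l x = 0 := by
        apply Finset.sum_eq_zero
        intro l hl
        have hkl : k ≤ l := (Finset.mem_filter.1 hl).2
        simp only [hσk_def]
        rw [if_neg]
        intro hxl
        exact hdisj j0 l (lt_of_lt_of_le hj0k hkl) x hxl hj0
      have h2 : σinf x = 0 := by
        simp only [hσinf_def]
        rw [if_neg]
        rintro ⟨-, h⟩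
        exact h j0 (le_trans (le_of_lt hj0k) hkN) hj0
      rw [hμ, h1, h2, add_zero]
  -- key bound: En (μk k) (σk k) ≤ mass (σk k)
  have hkey : ∀ k : ℕ, En (μk k) (σk k) ≤ mass (σk k) := by
    intro k
    rw [En_eq_pot]
    have hmass : mass (σk k) = ∑ ω : X × Y, (if IsMin ω then σk k ω else 0) := by
      rw [mass, Finset.sum_filter]
    rw [hmass]
    apply Finset.sum_le_sum
    intro ω _
    by_cases hω : ω ∈ Ek k
    · obtain ⟨hσpos, -, hpot⟩ := (hE k ω).1 hω
      have hmin : IsMin ω := by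
        by_contra h
        exact absurd (hσsupp ω h) (ne_of_gt hσpos)
      have hpot' : pot (μk k) ω ≤ 1 := hpot
      have hσkω : σk k ω = σ ω := by simp only [hσk_def]; rw [if_pos hω]
      rw [if_pos hmin, hσkω]
      calc pot (μk k) ω * σ ω ≤ 1 * σ ω :=
            mul_le_mul_of_nonneg_right hpot' (hσ0 ω)
        _ = σ ω := one_mul _
    · have hσkω : σk k ω = 0 := by simp only [hσk_def]; rw [if_neg hω]
      simp [hσkω]
  -- mass bound
  have hmassb : ∑ k ∈ s, mass (σk k) ≤ mass σ := by
    unfold mass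
    rw [Finset.sum_comm]
    apply Finset.sum_le_sum
    intro ω _
    have := hdecomp ω
    have := hσinf0 ω
    linarith
  -- assembly
  set τ : X × Y → ℝ := fun x => ∑ k ∈ s, σk k x with hτ_def
  have hστ : σ = fun x => τ x + σinf x := funext fun x => hdecomp x
  set e : ℕ → ℕ → ℝ := fun k l => En (σk k) (σk l) with he_def
  have he_nonneg : ∀ k l, 0 ≤ e k l := fun k l => En_nonneg (hσk0 k) (hσk0 l)
  have he_comm : ∀ k l, e k l = e l k := fun k l => En_comm _ _
  -- expand En σ σ
  have hexp : En σ σ = En τ τ + 2 * En σinf τ + En σinf σinf := by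
    rw [hστ]
    rw [En_add_left]
    rw [En_comm τ (fun x => τ x + σinf x), En_comm σinf (fun x => τ x + σinf x)]
    rw [En_add_left, En_add_left]
    rw [En_comm σinf τ]
    ring
  have hττ : En τ τ = ∑ k ∈ s, ∑ l ∈ s, e k l := by
    rw [hτ_def, En_sum_left]
    congr 1
    funext k
    rw [En_comm, En_sum_left]
    simp_rw [he_def, En_comm]
  have hinfτ : En σinf τ = ∑ k ∈ s, En σinf (σk k) := by
    rw [hτ_def, En_comm, En_sum_left]
    congr 1
    funext k
    rw [En_comm]
  -- split double sum
  have hsplit : ∀ k, ∑ l ∈ s, e k l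
      = (∑ l ∈ s.filter (fun l => k ≤ l), e k l)
        + ∑ l ∈ s.filter (fun l => ¬ k ≤ l), e k l :=
    fun k => (Finset.sum_filter_add_sum_filter_not s _ _).symm
  have hBA : (∑ k ∈ s, ∑ l ∈ s.filter (fun l => ¬ k ≤ l), e k l)
      ≤ ∑ k ∈ s, ∑ l ∈ s.filter (fun l => k ≤ l), e k l := by
    have h1 : (∑ k ∈ s, ∑ l ∈ s.filter (fun l => ¬ k ≤ l), e k l)
        = ∑ l ∈ s, ∑ k ∈ s, if ¬ k ≤ l then e k l else 0 := by
      simp_rw [Finset.sum_filter]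
      exact Finset.sum_comm
    have h2 : (∑ k ∈ s, ∑ l ∈ s.filter (fun l => k ≤ l), e k l)
        = ∑ l ∈ s, ∑ k ∈ s, if l ≤ k then e l k else 0 := by
      simp_rw [Finset.sum_filter]
    rw [h1, h2]
    apply Finset.sum_le_sum
    intro l _
    apply Finset.sum_le_sum
    intro k _
    split_ifs with h1' h2' <;>
      first
        | exact le_rfl
        | exact he_nonneg _ _
        | exact le_of_eq (he_comm _ _)
        | omega
  -- per-k bound
  have hperk : ∀ k ∈ s,
      (∑ l ∈ s.filter (fun l => k ≤ l), e k l) + En σinf (σk k)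
        ≤ mass (σk k) := by
    intro k hk
    have h1 : (∑ l ∈ s.filter (fun l => k ≤ l), e k l) + En σinf (σk k)
        = En (fun x => (∑ l ∈ s.filter (fun l => k ≤ l), σk l x) + σinf x) (σk k) := by
      rw [En_add_left, En_sum_left]
      congr 1
      apply Finset.sum_congr rfl
      intro l _
      rw [he_def]
      exact En_comm _ _
    rw [h1]
    calc En (fun x => (∑ l ∈ s.filter (fun l => k ≤ l), σk l x) + σinf x) (σk k)
        ≤ En (μk k) (σk k) := En_mono_left (hpt k hk) (hσk0 k)
      _ ≤ mass (σk k) := hkey k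
  -- finish
  have henergy_inf_nonneg : 0 ≤ energy σinf :=
    Finset.sum_nonneg fun a _ => sq_nonneg _
  have hmain : En σ σ ≤ 2 * mass σ + energy σinf := by
    rw [hexp, hττ, hinfτ]
    have hA : ∑ k ∈ s, ∑ l ∈ s, e k l
        ≤ 2 * ∑ k ∈ s, ∑ l ∈ s.filter (fun l => k ≤ l), e k l := by
      simp_rw [hsplit]
      rw [Finset.sum_add_distrib]
      linarith [hBA]
    have hB : (∑ k ∈ s, ∑ l ∈ s.filter (fun l => k ≤ l), e k l)
        + ∑ k ∈ s, En σinf (σk k) ≤ mass σ := by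
      calc (∑ k ∈ s, ∑ l ∈ s.filter (fun l => k ≤ l), e k l)
            + ∑ k ∈ s, En σinf (σk k)
          = ∑ k ∈ s, ((∑ l ∈ s.filter (fun l => k ≤ l), e k l) + En σinf (σk k)) := by
            rw [Finset.sum_add_distrib]
        _ ≤ ∑ k ∈ s, mass (σk k) := Finset.sum_le_sum hperk
        _ ≤ mass σ := hmassb
    have hEinf : En σinf σinf = energy σinf := (energy_eq_En σinf).symm
    linarith
  calc energy σ = En σ σ := energy_eq_En σ
    _ ≤ 2 * mass σ + energy σinf := hmain
    _ ≤ 2 * mass σ + 2 * energy σinf := by linarith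

end
end

section
/- Let μ be a nonnegative measure on ∂T² of a finite bi-tree. For a fixed vertical dyadic interval α_y, define g₁(τ_x) = Σ_{α' ≥ α_y, (τ_x × α') ∈ E₁} μ(τ_x × α'), where E₁ = {(τ × α) : 𝕍^μ(τ × α) < 1}. Then g₁ is two-point superharmonic in τ_x: for any dyadic interval τ_x with children τ_x¹, τ_x², one has g₁(τ_x) ≥ g₁(τ_x¹) + g₁(τ_x²). -/
open Finset
open scoped Classical

noncomputable section

variable {X Y : Type*} [Fintype X] [Fintype Y] [PartialOrder X] [PartialOrder Y]

/-- g₁(τ_x) = Σ_{α' ≥ α_y, (τ_x × α') ∈ E₁} μ(τ_x × α'), where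
E₁ = {(τ, α) : 𝕍^μ(τ × α) < 1} and μ(τ × α) = 𝕀*μ(τ, α). -/
def g1 (μ : X × Y → ℝ) (αy : Y) (τx : X) : ℝ :=
  ∑ α' ∈ Finset.univ.filter (fun α' : Y => αy ≤ α' ∧ pot μ (τx, α') < 1),
    hIs μ (τx, α')

/-- Lemma on two-point superadditivity: g₁ is two-point superharmonic in τ_x:
g₁(τ_x) ≥ g₁(τ_x¹) + g₁(τ_x²) for the two children τ_x¹, τ_x² of τ_x. -/
theorem stmt16 (μ : X × Y → ℝ) (hμ0 : ∀ a : X × Y, 0 ≤ μ a)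
    (hμsupp : ∀ a : X × Y, ¬ IsMin a → μ a = 0)
    (αy : Y) (τ τ₁ τ₂ : X)
    (h1 : τ₁ < τ) (h2 : τ₂ < τ)
    (hdisj : ∀ x : X, ¬ (x ≤ τ₁ ∧ x ≤ τ₂))
    (hpart : ∀ x : X, IsMin x → x ≤ τ → x ≤ τ₁ ∨ x ≤ τ₂) :
    g1 μ αy τ₁ + g1 μ αy τ₂ ≤ g1 μ αy τ := by
  have hIs_nonneg : ∀ a : X × Y, 0 ≤ hIs μ a := fun a =>
    Finset.sum_nonneg (fun b _ => hμ0 b)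
  -- potential is antitone in the X coordinate
  have hpotmono : ∀ (σ σ' : X) (α' : Y), σ' ≤ σ → pot μ (σ, α') ≤ pot μ (σ', α') := by
    intro σ σ' α' hσ
    apply Finset.sum_le_sum_of_subset_of_nonneg
    · intro b hb
      simp only [Finset.mem_filter, Finset.mem_univ, true_and] at hb ⊢
      exact le_trans (Prod.mk_le_mk.mpr ⟨hσ, le_rfl⟩) hb
    · intro b _ _; exact hIs_nonneg b
  -- splitting of hIs
  have hsplit : ∀ α' : Y, hIs μ (τ, α') = hIs μ (τ₁, α') + hIs μ (τ₂, α') := by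
    intro α'
    have hdisjf : Disjoint
        (Finset.univ.filter (fun b : X × Y => b ≤ (τ₁, α')))
        (Finset.univ.filter (fun b : X × Y => b ≤ (τ₂, α'))) := by
      rw [Finset.disjoint_left]
      intro b hb1 hb2
      simp only [Finset.mem_filter, Finset.mem_univ, true_and, Prod.le_def] at hb1 hb2
      exact hdisj b.1 ⟨hb1.1, hb2.1⟩
    have := (Finset.sum_union hdisjf (f := μ)).symm
    unfold hIs
    rw [this]
    apply (Finset.sum_subset _ _).symm
    · intro b hb
      simp only [Finset.mem_union, Finset.mem_filter, Finset.mem_univ, true_and,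
        Prod.le_def] at hb ⊢
      rcases hb with hb | hb
      · exact ⟨le_trans hb.1 h1.le, hb.2⟩
      · exact ⟨le_trans hb.1 h2.le, hb.2⟩
    · intro b hb hb'
      simp only [Finset.mem_union, Finset.mem_filter, Finset.mem_univ, true_and,
        Prod.le_def, not_or, not_and] at hb hb'
      by_contra hne
      have hbmin : IsMin b := by
        by_contra h; exact hne (hμsupp b h)
      have hbfst : IsMin b.1 := by
        intro x' hx'
        have : (x', b.2) ≤ b := Prod.mk_le_mk.mpr ⟨hx', le_rfl⟩
        exact (hbmin this).1
      rcases hpart b.1 hbfst hb.1 with h | h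
      · exact hb'.1 h hb.2
      · exact hb'.2 h hb.2
  -- the index sets
  set A := Finset.univ.filter (fun α' : Y => αy ≤ α' ∧ pot μ (τ, α') < 1) with hA
  have hsub : ∀ σ : X, σ ≤ τ →
      Finset.univ.filter (fun α' : Y => αy ≤ α' ∧ pot μ (σ, α') < 1) ⊆ A := by
    intro σ hσ α' hα'
    simp only [hA, Finset.mem_filter, Finset.mem_univ, true_and] at hα' ⊢
    exact ⟨hα'.1, lt_of_le_of_lt (hpotmono τ σ α' hσ) hα'.2⟩
  have hsub1 := hsub τ₁ h1.le
  have hsub2 := hsub τ₂ h2.le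
  have key : ∀ σ : X, σ ≤ τ →
      g1 μ αy σ ≤ ∑ α' ∈ A, hIs μ (σ, α') := by
    intro σ hσ
    apply Finset.sum_le_sum_of_subset_of_nonneg (hsub σ hσ)
    intro α' _ _; exact hIs_nonneg _
  calc g1 μ αy τ₁ + g1 μ αy τ₂
      ≤ (∑ α' ∈ A, hIs μ (τ₁, α')) + ∑ α' ∈ A, hIs μ (τ₂, α') :=
        add_le_add (key τ₁ h1.le) (key τ₂ h2.le)
    _ = ∑ α' ∈ A, (hIs μ (τ₁, α') + hIs μ (τ₂, α')) := (Finset.sum_add_distrib).symm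
    _ = ∑ α' ∈ A, hIs μ (τ, α') := by
        apply Finset.sum_congr rfl; intro α' _; exact (hsplit α').symm
    _ = g1 μ αy τ := rfl

end
end
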